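/- Let d_1, …, d_K be distinct squarefree integers greater than 1, and for each i let ε_i > 1 be the fundamental unit of the real quadratic field ℚ(√d_i), i.e. the smallest unit of its ring of integers that is greater than 1 (under the real embedding with √d_i > 0). Then ε_1, …, ε_K are multiplicatively independent: if m_1, …, m_K are integers with ∏_{i=1}^K ε_i^{m_i} = 1, then m_1 = ⋯ = m_K = 0. -/

import Mathlib

/-!
Work in a finite Galois extension `L ⊆ ℝ` of `ℚ` containing every `√dᵢ`. Each `σ ∈ Gal(L/ℚ)`
acts on `√dᵢ` by a sign `χᵢ(σ) = ±1`, and `σ εᵢ` is `εᵢ` or `±εᵢ⁻¹` accordingly, so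
`log |σ εᵢ| = χᵢ(σ) log εᵢ`. Applying `σ` to `∏ εᵢ ^ mᵢ = 1` and taking `log |·|` gives
`∑ᵢ mᵢ log εᵢ χᵢ(σ) = 0` for every `σ`. The characters are orthogonal: `χᵢ χⱼ` is the sign of
`σ` on `√dᵢ √dⱼ`, which is irrational for `dᵢ ≠ dⱼ`, hence moved by some automorphism, so
`∑_σ χᵢ(σ) χⱼ(σ) = 0`. Thus every `mᵢ log εᵢ` vanishes, and `log εᵢ > 0`.
-/

open Polynomial Real

/-- The units of the ring of integers of the real quadratic field `ℚ(√d)` (embedded in `ℝ`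
with `√d > 0`) are exactly the numbers `(a + b√d)/2` with `a, b ∈ ℤ` and `a² − d·b² = ±4`. -/
def IsQuadUnit (d : ℤ) (x : ℝ) : Prop :=
  ∃ a b : ℤ, x = ((a : ℝ) + (b : ℝ) * Real.sqrt (d : ℝ)) / 2 ∧
    (a ^ 2 - d * b ^ 2 = 4 ∨ a ^ 2 - d * b ^ 2 = -4)

theorem eq_zero_of_sum_mul_eq_zero_of_orthogonal {ι G R : Type*} [Fintype ι] [Fintype G]
    [CommSemiring R] [NoZeroDivisors R] {χ : ι → G → R}
    (horth : Pairwise fun i j ↦ ∑ g, χ i g * χ j g = 0) {x : ι → R}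
    (hx : ∀ g, ∑ i, x i * χ i g = 0) {j : ι} (hj : ∑ g, χ j g * χ j g ≠ 0) : x j = 0 := by
  have h : ∑ i, x i * ∑ g, χ i g * χ j g = 0 := by
    simp_rw [Finset.mul_sum, ← mul_assoc]
    rw [Finset.sum_comm]
    simp_rw [← Finset.sum_mul, hx, zero_mul, Finset.sum_const_zero]
  rw [Finset.sum_eq_single j (fun i _ hij ↦ by rw [horth hij, mul_zero])
    (fun h ↦ absurd (Finset.mem_univ j) h)] at h
  exact (mul_eq_zero.mp h).resolve_right hj

theorem Int.eq_of_squarefree_of_isSquare_mul {x y : ℤ} (hx : 0 < x) (hsx : Squarefree x)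
    (hsy : Squarefree y) (h : IsSquare (x * y)) : x = y := by
  obtain ⟨c, hc⟩ := h
  obtain ⟨e, rfl⟩ : x ∣ c := by
    rw [← hsx.dvd_pow_iff_dvd two_ne_zero]
    exact ⟨y, by rw [sq, ← hc]⟩
  have hy : y = x * e * e := mul_left_cancel₀ hx.ne' (by rw [hc]; ring)
  rcases Int.isUnit_iff.mp (hsy e ⟨x, by rw [hy]; ring⟩) with rfl | rfl <;> simpa using hy.symm

theorem irrational_sqrt_mul_sqrt_of_squarefree {d e : ℤ} (hd : 0 < d) (he : 0 < e)
    (hsd : Squarefree d) (hse : Squarefree e) (hde : d ≠ e) : Irrational (√d * √e) := by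
  rw [← sqrt_mul (by positivity), ← Int.cast_mul, irrational_sqrt_intCast_iff]
  exact ⟨fun h ↦ hde (Int.eq_of_squarefree_of_isSquare_mul hd hsd hse h), by positivity⟩

theorem log_quadConj_eq_neg_log {d a b : ℤ} (hd : 0 ≤ d)
    (hab : a ^ 2 - d * b ^ 2 = 4 ∨ a ^ 2 - d * b ^ 2 = -4) :
    log ((a - b * √d) / 2) = -log ((a + b * √d) / 2) := by
  have hnorm : (a - b * √d) / 2 * ((a + b * √d) / 2) = ((a ^ 2 - d * b ^ 2 : ℤ) : ℝ) / 4 := by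
    push_cast
    linear_combination (-(b : ℝ) ^ 2 / 4) * sq_sqrt (Int.cast_nonneg_iff.mpr hd)
  rcases hab with h | h <;> rw [h] at hnorm <;> norm_num at hnorm
  · rw [eq_inv_of_mul_eq_one_left hnorm, log_inv]
  · have hneg : -((a - b * √d) / 2) * ((a + b * √d) / 2) = 1 := by linear_combination -hnorm
    rw [← log_neg_eq_log, eq_inv_of_mul_eq_one_left hneg, log_inv]

theorem Real.sum_mul_log_eq_zero_of_prod_zpow_eq_one {ι : Type*} [Fintype ι] {y : ι → ℝ}
    {m : ι → ℤ} (h : ∏ i, y i ^ m i = 1) : ∑ i, m i * log (y i) = 0 := by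
  have hne : ∀ i ∈ Finset.univ, y i ^ m i ≠ 0 := Finset.prod_ne_zero_iff.mp (h ▸ one_ne_zero)
  simp_rw [← log_zpow, ← log_prod hne, h, log_one]

section Galois

variable {F E : Type*} [Field F] [Field E] [Algebra F E]

theorem AlgEquiv.map_eq_or_eq_neg_of_sq_eq_algebraMap (σ : E ≃ₐ[F] E) {s : E} {c : F}
    (hs : s ^ 2 = algebraMap F E c) : σ s = s ∨ σ s = -s :=
  sq_eq_sq_iff_eq_or_eq_neg.mp (by rw [← map_pow, hs, AlgEquiv.commutes])

theorem AlgEquiv.map_div_self_mul_self_eq_one (σ : E ≃ₐ[F] E) {s : E} {c : F}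
    (hs : s ^ 2 = algebraMap F E c) (hs0 : s ≠ 0) : σ s / s * (σ s / s) = 1 := by
  rcases σ.map_eq_or_eq_neg_of_sq_eq_algebraMap hs with h | h <;> simp [h, hs0]

theorem sum_algEquiv_apply_eq_zero_of_sq_eq_algebraMap [FiniteDimensional F E] [IsGalois F E]
    [NeZero (2 : E)] {u : E} {c : F} (hu : u ^ 2 = algebraMap F E c)
    (hu' : u ∉ (⊥ : IntermediateField F E)) : ∑ σ : E ≃ₐ[F] E, σ u = 0 := by
  obtain ⟨τ, hτ⟩ : ∃ τ : E ≃ₐ[F] E, τ u ≠ u := by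
    simpa [IsGalois.mem_bot_iff_fixed] using hu'
  have hτu : τ u = -u := (τ.map_eq_or_eq_neg_of_sq_eq_algebraMap hu).resolve_left hτ
  -- reindexing by `σ ↦ σ * τ` shows that the sum is its own negative
  have h : ∑ σ : E ≃ₐ[F] E, σ u = -∑ σ : E ≃ₐ[F] E, σ u := by
    calc ∑ σ : E ≃ₐ[F] E, σ u = ∑ σ : E ≃ₐ[F] E, (σ * τ) u :=
          (Equiv.sum_comp (Equiv.mulRight τ) fun σ ↦ σ u).symm
      _ = -∑ σ : E ≃ₐ[F] E, σ u := by simp [AlgEquiv.mul_apply, hτu]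
  have h2 : (2 : E) * ∑ σ : E ≃ₐ[F] E, σ u = 0 := by linear_combination h
  exact (mul_eq_zero.mp h2).resolve_left two_ne_zero

theorem sum_algEquiv_div_mul_div_eq_zero [FiniteDimensional F E] [IsGalois F E]
    [NeZero (2 : E)] {s t : E} {c c' : F} (hs : s ^ 2 = algebraMap F E c)
    (ht : t ^ 2 = algebraMap F E c') (hst : s * t ∉ (⊥ : IntermediateField F E)) :
    ∑ σ : E ≃ₐ[F] E, σ s / s * (σ t / t) = 0 := by
  simp_rw [div_mul_div_comm, ← map_mul, ← Finset.sum_div]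
  rw [sum_algEquiv_apply_eq_zero_of_sq_eq_algebraMap (c := c * c')
    (by rw [mul_pow, hs, ht, map_mul]) hst, zero_div]

end Galois

theorem splits_X_sq_sub_C_map_real {c : ℚ} (hc : 0 ≤ c) :
    ((X ^ 2 - C c).map (algebraMap ℚ ℝ)).Splits := by
  have hmap : (X ^ 2 - C c).map (algebraMap ℚ ℝ) = (X - C √c) * (X - C (-√c)) := by
    have hC : C (c : ℝ) = C √c * C √c := by
      rw [← map_mul, mul_self_sqrt (Rat.cast_nonneg.mpr hc)]
    rw [Polynomial.map_sub, Polynomial.map_pow, map_X, map_C, eq_ratCast, hC, map_neg]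
    ring
  rw [hmap]
  exact (Splits.X_sub_C _).mul (Splits.X_sub_C _)

theorem IntermediateField.finiteDimensional_and_isGalois_adjoin_rootSet {F K : Type*} [Field F]
    [CharZero F] [Field K] [Algebra F K] {p : F[X]} (hp : (p.map (algebraMap F K)).Splits) :
    FiniteDimensional F (adjoin F (p.rootSet K)) ∧ IsGalois F (adjoin F (p.rootSet K)) := by
  have := adjoin_rootSet_isSplittingField hp
  have := IsSplittingField.finiteDimensional (adjoin F (p.rootSet K)) p
  exact ⟨this, { to_normal := Normal.of_isSplittingField p }⟩

theorem exists_isGalois_intermediateField_sqrt_mem {ι : Type*} [Fintype ι] (d : ι → ℚ)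
    (hd : ∀ i, 0 ≤ d i) :
    ∃ L : IntermediateField ℚ ℝ, FiniteDimensional ℚ L ∧ IsGalois ℚ L ∧ ∀ i, √(d i) ∈ L := by
  have hp : (∏ i, (X ^ 2 - C (d i))).Monic :=
    monic_prod_of_monic _ _ fun i _ ↦ monic_X_pow_sub_C _ two_ne_zero
  have hsplits : ((∏ i, (X ^ 2 - C (d i))).map (algebraMap ℚ ℝ)).Splits := by
    rw [Polynomial.map_prod]
    exact Splits.prod fun i _ ↦ splits_X_sq_sub_C_map_real (hd i)
  refine ⟨_, (IntermediateField.finiteDimensional_and_isGalois_adjoin_rootSet hsplits).1,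
    (IntermediateField.finiteDimensional_and_isGalois_adjoin_rootSet hsplits).2,
    fun i ↦ IntermediateField.subset_adjoin _ _ (mem_rootSet.mpr ⟨hp.ne_zero, ?_⟩)⟩
  rw [map_prod]
  exact Finset.prod_eq_zero (Finset.mem_univ i) (by simp [sq_sqrt (Rat.cast_nonneg.mpr (hd i))])

section RealSubfield

-- For `s = √d ∈ L`, the "sign" `σ s / s = ±1` records whether `σ` is trivial on `ℚ(√d)`.
variable {L : IntermediateField ℚ ℝ} {d : ℤ} {s : L}

theorem sq_eq_algebraMap_of_coe_eq_sqrt (hd : 0 ≤ d) (hs : (s : ℝ) = √d) :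
    s ^ 2 = algebraMap ℚ L d :=
  Subtype.ext (by simp [hs, sq_sqrt (Int.cast_nonneg_iff.mpr hd)])

theorem ne_zero_of_coe_eq_sqrt (hd : 0 < d) (hs : (s : ℝ) = √d) : s ≠ 0 := by
  rintro rfl
  have : (0 : ℝ) < √d := sqrt_pos.mpr (by exact_mod_cast hd)
  simp [← hs] at this

theorem log_algEquiv_apply_quadUnit (σ : L ≃ₐ[ℚ] L) (hd : 0 < d) (hs : (s : ℝ) = √d) {a b : ℤ}
    (hab : a ^ 2 - d * b ^ 2 = 4 ∨ a ^ 2 - d * b ^ 2 = -4) :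
    log (σ ((a + b * s) / 2) : ℝ) = ((σ s / s : L) : ℝ) * log ((a + b * √d) / 2) := by
  have hσ : σ ((a + b * s) / 2) = (a + b * σ s) / 2 := by simp [map_div₀, map_ofNat]
  have hs0 := ne_zero_of_coe_eq_sqrt hd hs
  have h2 : ((2 : L) : ℝ) = 2 := rfl
  rcases σ.map_eq_or_eq_neg_of_sq_eq_algebraMap (sq_eq_algebraMap_of_coe_eq_sqrt hd.le hs)
    with h | h <;> rw [hσ, h]
  · rw [div_self hs0]
    push_cast [hs, h2]
    ring
  · rw [neg_div, div_self hs0, mul_neg, ← sub_eq_add_neg]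
    push_cast [hs, h2]
    rw [log_quadConj_eq_neg_log hd.le hab]
    ring

theorem sum_algEquiv_sign_mul_sign_eq_zero [FiniteDimensional ℚ L] [IsGalois ℚ L] {e : ℤ}
    {t : L} (hd : 0 < d) (he : 0 < e) (hsd : Squarefree d) (hse : Squarefree e) (hde : d ≠ e)
    (hs : (s : ℝ) = √d) (ht : (t : ℝ) = √e) :
    ∑ σ : L ≃ₐ[ℚ] L, ((σ s / s : L) : ℝ) * ((σ t / t : L) : ℝ) = 0 := by
  have hst : s * t ∉ (⊥ : IntermediateField ℚ L) := by
    rintro ⟨q, hq⟩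
    refine irrational_sqrt_mul_sqrt_of_squarefree hd he hsd hse hde ⟨q, ?_⟩
    rw [← hs, ← ht, ← IntermediateField.coe_mul, ← hq]
    rfl
  have h := sum_algEquiv_div_mul_div_eq_zero (sq_eq_algebraMap_of_coe_eq_sqrt hd.le hs)
    (sq_eq_algebraMap_of_coe_eq_sqrt he.le ht) hst
  exact_mod_cast congrArg ((↑) : L → ℝ) h

theorem sum_algEquiv_sign_mul_self_eq_card [FiniteDimensional ℚ L] (hd : 0 < d)
    (hs : (s : ℝ) = √d) :
    ∑ σ : L ≃ₐ[ℚ] L, ((σ s / s : L) : ℝ) * ((σ s / s : L) : ℝ) = Fintype.card (L ≃ₐ[ℚ] L) := by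
  have h (σ : L ≃ₐ[ℚ] L) : ((σ s / s : L) : ℝ) * ((σ s / s : L) : ℝ) = 1 := by
    rw [← IntermediateField.coe_mul, σ.map_div_self_mul_self_eq_one
      (sq_eq_algebraMap_of_coe_eq_sqrt hd.le hs) (ne_zero_of_coe_eq_sqrt hd hs)]
    rfl
  rw [Finset.sum_congr rfl fun σ _ ↦ h σ]
  simp

theorem sum_mul_log_mul_sign_eq_zero {ι : Type*} [Fintype ι] {d : ι → ℤ} (hd : ∀ i, 0 < d i)
    {s : ι → L} (hs : ∀ i, (s i : ℝ) = √(d i)) {ε : ι → ℝ} (hε : ∀ i, IsQuadUnit (d i) (ε i))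
    {m : ι → ℤ} (hprod : ∏ i, ε i ^ m i = 1) (σ : L ≃ₐ[ℚ] L) :
    ∑ i, m i * log (ε i) * ((σ (s i) / s i : L) : ℝ) = 0 := by
  choose a b hεab hab using hε
  set e : ι → L := fun i ↦ (a i + b i * s i) / 2
  have he : ∀ i, (e i : ℝ) = ε i := fun i ↦ by
    rw [hεab]
    push_cast [e, hs]
    rfl
  have hprodL : ∏ i, e i ^ m i = 1 :=
    (L.val : L →+* ℝ).injective (by simpa [map_prod, map_zpow₀, he] using hprod)
  have hσprod : ∏ i, ((σ (e i) : L) : ℝ) ^ m i = 1 := by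
    simpa [map_prod, map_zpow₀] using congrArg (fun x ↦ L.val (σ x)) hprodL
  rw [← Real.sum_mul_log_eq_zero_of_prod_zpow_eq_one hσprod]
  refine Finset.sum_congr rfl fun i _ ↦ ?_
  rw [log_algEquiv_apply_quadUnit σ (hd i) (hs i) (hab i), hεab]
  ring

end RealSubfield

/-- **Multiplicative independence of fundamental units**: if `d_1, …, d_K` are distinct
squarefree integers `> 1` and `ε_i` is the fundamental unit of `ℚ(√d_i)` (the least unit of
its ring of integers exceeding `1`), then `∏ ε_i ^ m_i = 1` with `m_i ∈ ℤ` forces all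
`m_i = 0`. -/
theorem fundamental_units_multiplicatively_independent
    (K : ℕ) (d : Fin K → ℤ) (hd_gt : ∀ i, 1 < d i) (hd_sqfree : ∀ i, Squarefree (d i))
    (hd_distinct : Function.Injective d)
    (ε : Fin K → ℝ)
    (hε : ∀ i, IsLeast {x : ℝ | 1 < x ∧ IsQuadUnit (d i) x} (ε i))
    (m : Fin K → ℤ) (hprod : ∏ i, ε i ^ m i = 1) :
    ∀ i, m i = 0 := by
  have hd : ∀ i, 0 < d i := fun i ↦ one_pos.trans (hd_gt i)
  obtain ⟨L, _, _, hsqrt⟩ :=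
    exists_isGalois_intermediateField_sqrt_mem (fun i ↦ (d i : ℚ)) fun i ↦ mod_cast (hd i).le
  let s : Fin K → L := fun i ↦ ⟨√(d i), by simpa using hsqrt i⟩
  let χ : Fin K → (L ≃ₐ[ℚ] L) → ℝ := fun i σ ↦ ((σ (s i) / s i : L) : ℝ)
  have horth : Pairwise fun i j ↦ ∑ σ, χ i σ * χ j σ = 0 := fun i j hij ↦
    sum_algEquiv_sign_mul_sign_eq_zero (hd i) (hd j) (hd_sqfree i) (hd_sqfree j)
      (hd_distinct.ne hij) rfl rfl
  have hrel (σ : L ≃ₐ[ℚ] L) : ∑ i, m i * log (ε i) * χ i σ = 0 :=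
    sum_mul_log_mul_sign_eq_zero hd (fun _ ↦ rfl) (fun i ↦ (hε i).1.2) hprod σ
  intro j
  have hdiag : ∑ σ, χ j σ * χ j σ ≠ 0 := by
    rw [sum_algEquiv_sign_mul_self_eq_card (hd j) rfl]
    exact_mod_cast Fintype.card_ne_zero
  have h := eq_zero_of_sum_mul_eq_zero_of_orthogonal horth hrel hdiag
  exact_mod_cast (mul_eq_zero.mp h).resolve_right (log_pos (hε j).1.1).ne'
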